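/- Define the generalized Eulerian numbers E(n,k)(a,b;c0,c∞) by E(0,0)=1, E(n,k)=0 for k<0 or k>n, and E(n+1,k+1) = (−a·n + b·(k+1) + c0)·E(n,k+1) + ((a+b)·n − b·k + c∞)·E(n,k). Then for all n ≥ 0 and all x: (c0+c∞)(c0+c∞+b)···(c0+c∞+(n−1)b) · x(x−a)···(x−(n−1)a) = Σ_{k=0}^{n} E(n,k)(a,b;c0,c∞) · (x−c0)(x−c0−b)···(x−c0−(k−1)b) · (x+c∞)(x+c∞+b)···(x+c∞+(n−k−1)b) (generalized Worpitzky identity). -/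

import Mathlib

/-- Generalized Eulerian numbers E(n,k)(a,b;c0,c∞). -/
def gE (a b c0 ci : ℚ) : ℕ → ℕ → ℚ
  | 0, 0 => 1
  | 0, _+1 => 0
  | n+1, 0 => (-a * n + c0) * gE a b c0 ci n 0
  | n+1, k+1 => (-a * n + b * (k+1) + c0) * gE a b c0 ci n (k+1)
      + ((a+b) * n - b * k + ci) * gE a b c0 ci n k

lemma gE_zero (a b c0 ci : ℚ) : ∀ n k, n < k → gE a b c0 ci n k = 0 := by
  intro n
  induction n with
  | zero => intro k hk; match k, hk with | k+1, _ => rfl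
  | succ n ih =>
      intro k hk
      match k, hk with
      | k+1, hk =>
        have h1 : gE a b c0 ci n (k+1) = 0 := ih _ (by omega)
        have h2 : gE a b c0 ci n k = 0 := ih _ (by omega)
        show (-a * n + b * (k+1) + c0) * gE a b c0 ci n (k+1)
          + ((a+b) * n - b * k + ci) * gE a b c0 ci n k = 0
        rw [h1, h2]; ring

/-- Generalized Worpitzky identity. -/
theorem generalized_worpitzky (a b c0 ci : ℚ) (n : ℕ) (x : ℚ) :
    (∏ i ∈ Finset.range n, (c0 + ci + (i : ℚ) * b)) *
        ∏ i ∈ Finset.range n, (x - (i : ℚ) * a) =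
      ∑ k ∈ Finset.range (n+1), gE a b c0 ci n k *
        (∏ i ∈ Finset.range k, (x - c0 - (i : ℚ) * b)) *
        ∏ i ∈ Finset.range (n-k), (x + ci + (i : ℚ) * b) := by
  set P : ℕ → ℚ := fun k => ∏ i ∈ Finset.range k, (x - c0 - (i : ℚ) * b) with hP
  set Q : ℕ → ℚ := fun m => ∏ i ∈ Finset.range m, (x + ci + (i : ℚ) * b) with hQ
  induction n with
  | zero => simp [gE, P, Q]
  | succ n ih =>
      have key : ∀ k ∈ Finset.range (n+1),
          (c0 + ci + (n:ℚ) * b) * (x - (n:ℚ) * a) * (gE a b c0 ci n k * P k * Q (n-k))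
          = (-a * n + b * k + c0) * gE a b c0 ci n k * P k * Q (n+1-k)
            + ((a+b) * n - b * k + ci) * gE a b c0 ci n k * P (k+1) * Q (n-k) := by
        intro k hk
        have hkn : k ≤ n := Nat.lt_succ_iff.mp (Finset.mem_range.mp hk)
        have h1 : n + 1 - k = (n - k) + 1 := by omega
        have h2 : Q ((n-k)+1) = Q (n-k) * (x + ci + ((n:ℚ) - (k:ℚ)) * b) := by
          simp only [hQ, Finset.prod_range_succ, Nat.cast_sub hkn]
        have h3 : P (k+1) = P k * (x - c0 - (k:ℚ) * b) := by
          simp only [hP, Finset.prod_range_succ]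
        rw [h1, h2, h3]; ring
      calc (∏ i ∈ Finset.range (n+1), (c0 + ci + (i : ℚ) * b)) *
            ∏ i ∈ Finset.range (n+1), (x - (i : ℚ) * a)
          = (c0 + ci + (n:ℚ) * b) * (x - (n:ℚ) * a) *
            ((∏ i ∈ Finset.range n, (c0 + ci + (i : ℚ) * b)) *
              ∏ i ∈ Finset.range n, (x - (i : ℚ) * a)) := by
            rw [Finset.prod_range_succ, Finset.prod_range_succ]; ring
        _ = ∑ k ∈ Finset.range (n+1), (c0 + ci + (n:ℚ) * b) * (x - (n:ℚ) * a) *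
              (gE a b c0 ci n k * P k * Q (n-k)) := by
            rw [ih, Finset.mul_sum]
        _ = ∑ k ∈ Finset.range (n+1),
              ((-a * n + b * k + c0) * gE a b c0 ci n k * P k * Q (n+1-k)
               + ((a+b) * n - b * k + ci) * gE a b c0 ci n k * P (k+1) * Q (n-k)) :=
            Finset.sum_congr rfl key
        _ = (∑ k ∈ Finset.range (n+1),
              (-a * n + b * k + c0) * gE a b c0 ci n k * P k * Q (n+1-k))
            + ∑ k ∈ Finset.range (n+1),
              ((a+b) * n - b * k + ci) * gE a b c0 ci n k * P (k+1) * Q (n-k) := by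
            rw [Finset.sum_add_distrib]
        _ = ∑ k ∈ Finset.range (n+1+1), gE a b c0 ci (n+1) k * P k * Q (n+1-k) := by
            rw [Finset.sum_range_succ' (fun k => gE a b c0 ci (n+1) k * P k * Q (n+1-k)) (n+1)]
            have e1 : ∀ k : ℕ, gE a b c0 ci (n+1) (k+1) * P (k+1) * Q (n+1-(k+1))
                = (-a * (n:ℚ) + b * ((k:ℚ)+1) + c0) * gE a b c0 ci n (k+1) * P (k+1) * Q (n-k)
                  + ((a+b) * (n:ℚ) - b * (k:ℚ) + ci) * gE a b c0 ci n k * P (k+1) * Q (n-k) := by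
              intro k
              show ((-a * (n:ℚ) + b * ((k:ℚ)+1) + c0) * gE a b c0 ci n (k+1)
                + ((a+b) * (n:ℚ) - b * (k:ℚ) + ci) * gE a b c0 ci n k) * P (k+1) * Q (n+1-(k+1)) = _
              have h : n+1-(k+1) = n - k := by omega
              rw [h]; ring
            simp only [e1]
            rw [Finset.sum_add_distrib]
            have e2 : (∑ k ∈ Finset.range (n+1),
                (-a * (n:ℚ) + b * (k:ℚ) + c0) * gE a b c0 ci n k * P k * Q (n+1-k))
              = (∑ k ∈ Finset.range n,
                  (-a * (n:ℚ) + b * ((k:ℚ)+1) + c0) * gE a b c0 ci n (k+1) * P (k+1) * Q (n-k))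
                + (-a * (n:ℚ) + c0) * gE a b c0 ci n 0 * P 0 * Q (n+1) := by
              rw [Finset.sum_range_succ' (fun k =>
                (-a * (n:ℚ) + b * (k:ℚ) + c0) * gE a b c0 ci n k * P k * Q (n+1-k)) n]
              congr 1
              · apply Finset.sum_congr rfl
                intro k _
                have h : n+1-(k+1) = n - k := by omega
                rw [h]; push_cast; ring
              · norm_num
            rw [e2]
            have e4 : (∑ k ∈ Finset.range (n+1),
                (-a * (n:ℚ) + b * ((k:ℚ)+1) + c0) * gE a b c0 ci n (k+1) * P (k+1) * Q (n-k))
              = ∑ k ∈ Finset.range n,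
                (-a * (n:ℚ) + b * ((k:ℚ)+1) + c0) * gE a b c0 ci n (k+1) * P (k+1) * Q (n-k) := by
              rw [Finset.sum_range_succ, gE_zero a b c0 ci n (n+1) (by omega)]
              simp
            have e5 : gE a b c0 ci (n+1) 0 * P 0 * Q (n+1-0)
                = (-a * (n:ℚ) + c0) * gE a b c0 ci n 0 * P 0 * Q (n+1) := by
              show ((-a * (n:ℚ) + c0) * gE a b c0 ci n 0) * P 0 * Q (n+1-0) = _
              norm_num
            rw [e4, e5]
            ring
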